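/- arXiv:2005.01232 — 4 statements merged into one kernel-verified Lean document; each statement's English description precedes it below -/
import Mathlib

section
/- The function d₀ defined on pairs of paths by d₀(x_r, x̄_t) = √|t−r| + sup_{s∈[0,t]} ( |x_r(s)−x̄_t(s)|·1_{[0,r)}(s) + |x_r(r)−x̄_t(s)|·1_{[r,t]}(s) ) for 0 ≤ r ≤ t ≤ T (and symmetrically for r ≥ t) is a metric on the disjoint-in-time union Λ^0 = ∪_{r∈[0,T]} C([0,r];ℝ^d). -/
open Set

noncomputable section

/-- The space `Λ^0 = ∪_{r∈[0,T]} C([0,r];ℝ^d)` of continuous paths with varying time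
horizons, encoded as a sigma type. -/
def Lam0 (d : ℕ) (T : ℝ) :=
  Σ r : Set.Icc (0:ℝ) T, C(Set.Icc (0:ℝ) (r : ℝ), EuclideanSpace ℝ (Fin d))

/-- The horizontal extension of a path `x ∈ Λ_r^0` to `[0,T]`, freezing the value after
time `r`: `(ext0 x)(s) = x(min r s)`. -/
def ext0 {d : ℕ} {T : ℝ} (x : Lam0 d T) :
    C(Set.Icc (0:ℝ) T, EuclideanSpace ℝ (Fin d)) :=
  x.2.comp ⟨fun s => ⟨min (x.1 : ℝ) (s : ℝ), ⟨le_min x.1.2.1 s.2.1, min_le_left _ _⟩⟩,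
    Continuous.subtype_mk (continuous_const.min continuous_subtype_val) _⟩

/-- The metric `d₀(x_r, x̄_t) = √|t−r| + sup_{s∈[0,t]} ( |x_r(s)−x̄_t(s)|·1_[0,r)(s)
+ |x_r(r)−x̄_t(s)|·1_[r,t](s) )` (for `r ≤ t`, and symmetrically for `r ≥ t`): the
supremum part equals the sup-distance between the horizontal extensions. -/
def d0 {d : ℕ} {T : ℝ} (x y : Lam0 d T) : ℝ :=
  Real.sqrt |(y.1 : ℝ) - (x.1 : ℝ)| + dist (ext0 x) (ext0 y)

lemma sqrt_sub_add_le (a b c : ℝ) :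
    Real.sqrt |c - a| ≤ Real.sqrt |b - a| + Real.sqrt |c - b| := by
  have h1 : |c - a| ≤ |b - a| + |c - b| := by
    calc |c - a| = |(b - a) + (c - b)| := by ring_nf
    _ ≤ |b - a| + |c - b| := abs_add_le _ _
  calc Real.sqrt |c - a| ≤ Real.sqrt (|b - a| + |c - b|) := Real.sqrt_le_sqrt h1
  _ ≤ Real.sqrt |b - a| + Real.sqrt |c - b| := by
      rw [show Real.sqrt |b - a| + Real.sqrt |c - b| =
        Real.sqrt ((Real.sqrt |b - a| + Real.sqrt |c - b|) ^ 2) from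
        (Real.sqrt_sq (by positivity)).symm]
      apply Real.sqrt_le_sqrt
      nlinarith [Real.sq_sqrt (abs_nonneg (b - a)), Real.sq_sqrt (abs_nonneg (c - b)),
        Real.sqrt_nonneg |b - a|, Real.sqrt_nonneg |c - b|,
        mul_nonneg (Real.sqrt_nonneg |b - a|) (Real.sqrt_nonneg |c - b|)]

/-- `d₀` is a metric on `Λ^0`. -/
theorem stmt_1 (d : ℕ) (hd : 0 < d) (T : ℝ) (hT : 0 < T) :
    (∀ x : Lam0 d T, d0 x x = 0) ∧
    (∀ x y : Lam0 d T, d0 x y = d0 y x) ∧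
    (∀ x y : Lam0 d T, d0 x y = 0 → x = y) ∧
    (∀ x y z : Lam0 d T, d0 x z ≤ d0 x y + d0 y z) := by
  refine ⟨fun x => by simp [d0], fun x y => by simp [d0, abs_sub_comm, dist_comm], ?_, ?_⟩
  · rintro ⟨r, f⟩ ⟨s, g⟩ h
    simp only [d0] at h
    have h1 : Real.sqrt |(s : ℝ) - (r : ℝ)| = 0 ∧
        dist (ext0 (⟨r, f⟩ : Lam0 d T)) (ext0 ⟨s, g⟩) = 0 := by
      constructor <;> nlinarith [Real.sqrt_nonneg |(s : ℝ) - (r : ℝ)|,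
        dist_nonneg (x := ext0 (⟨r, f⟩ : Lam0 d T)) (y := ext0 ⟨s, g⟩),
        h]
    have hrs : r = s := by
      have := Real.sqrt_eq_zero'.1 h1.1
      have : |(s : ℝ) - (r : ℝ)| = 0 := le_antisymm this (abs_nonneg _)
      ext
      have := abs_eq_zero.1 this
      linarith
    subst hrs
    have hext : ext0 (⟨r, f⟩ : Lam0 d T) = ext0 ⟨r, g⟩ := dist_eq_zero.1 h1.2
    congr 1
    refine ContinuousMap.ext fun p => ?_
    have hp : (p : ℝ) ≤ T := p.2.2.trans r.2.2
    have := ContinuousMap.congr_fun hext ⟨(p : ℝ), ⟨p.2.1, hp⟩⟩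
    simpa [ext0, min_eq_right p.2.2] using this
  · intro x y z
    have := sqrt_sub_add_le (x.1 : ℝ) (y.1 : ℝ) (z.1 : ℝ)
    have := dist_triangle (ext0 x) (ext0 y) (ext0 z)
    simp only [d0]
    linarith
end
end

section
/- The metric space (Λ^0, d₀) is complete: every d₀-Cauchy sequence of continuous paths (possibly defined on different time intervals [0,r_n] ⊆ [0,T]) converges in d₀ to an element of Λ^0. -/
open Set

noncomputable section

/-!
The distance `d0` dominates both `√|r_m - r_n|` and the uniform distance between the frozen
extensions `ext0 (u n)`, so a `d0`-Cauchy sequence has horizons converging to some `r` and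
extensions converging uniformly to some `g`. Each extension satisfies `ext0 x (min x.1 s) =
ext0 x s`, a condition that is closed jointly in the horizon and the path; hence `g` is frozen
after `r`, i.e. it is the extension of its restriction to `[0, r]`, and that restriction is the
`d0`-limit.
-/

open Filter Topology

theorem isClosed_setOf_forall_apply_min_eq {X Y : Type*} [TopologicalSpace X] [LinearOrder X]
    [OrderClosedTopology X] [LocallyCompactSpace X] [TopologicalSpace Y] [T2Space Y] :
    IsClosed {p : X × C(X, Y) | ∀ s, p.2 (min p.1 s) = p.2 s} := by
  simp only [Set.ofPred_forall]
  exact isClosed_iInter fun s => isClosed_eq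
    (continuous_eval.comp (continuous_snd.prodMk (continuous_fst.min continuous_const)))
    ((continuous_eval_const s).comp continuous_snd)

section

variable {d : ℕ} {T : ℝ}

theorem ext0_apply_min (x : Lam0 d T) (s : Icc (0:ℝ) T) : ext0 x (min x.1 s) = ext0 x s := by
  simp only [ext0, ContinuousMap.comp_apply, ContinuousMap.coe_mk]
  congr 2
  exact inf_left_idem _ _

theorem exists_ext0_eq {r : Icc (0:ℝ) T} {g : C(Icc (0:ℝ) T, EuclideanSpace ℝ (Fin d))}
    (hg : ∀ s, g (min r s) = g s) : ∃ x : Lam0 d T, x.1 = r ∧ ext0 x = g :=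
  ⟨⟨r, g.comp ⟨inclusion (Icc_subset_Icc_right r.2.2), continuous_inclusion _⟩⟩, rfl, by
    ext1 s; rw [← hg s]; rfl⟩

theorem d0_nonneg (x y : Lam0 d T) : 0 ≤ d0 x y := by
  unfold d0; positivity

theorem dist_fst_le_d0_sq (x y : Lam0 d T) : dist x.1 y.1 ≤ d0 x y ^ 2 := by
  rw [Subtype.dist_eq, Real.dist_eq, abs_sub_comm, ← Real.sqrt_le_left (d0_nonneg x y)]
  exact le_add_of_nonneg_right dist_nonneg

theorem dist_ext0_le_d0 (x y : Lam0 d T) : dist (ext0 x) (ext0 y) ≤ d0 x y :=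
  le_add_of_nonneg_left (Real.sqrt_nonneg _)

theorem cauchySeq_fst_of_d0 {u : ℕ → Lam0 d T}
    (hu : ∀ ε > (0:ℝ), ∃ N : ℕ, ∀ m ≥ N, ∀ n ≥ N, d0 (u m) (u n) < ε) :
    CauchySeq fun n => (u n).1 := by
  refine Metric.cauchySeq_iff.2 fun ε hε => ?_
  obtain ⟨N, hN⟩ := hu (√ε) (Real.sqrt_pos.2 hε)
  refine ⟨N, fun m hm n hn => ?_⟩
  calc dist (u m).1 (u n).1 ≤ d0 (u m) (u n) ^ 2 := dist_fst_le_d0_sq _ _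
    _ < √ε ^ 2 := pow_lt_pow_left₀ (hN m hm n hn) (d0_nonneg _ _) two_ne_zero
    _ = ε := Real.sq_sqrt hε.le

theorem cauchySeq_ext0_of_d0 {u : ℕ → Lam0 d T}
    (hu : ∀ ε > (0:ℝ), ∃ N : ℕ, ∀ m ≥ N, ∀ n ≥ N, d0 (u m) (u n) < ε) :
    CauchySeq fun n => ext0 (u n) :=
  Metric.cauchySeq_iff.2 fun ε hε => (hu ε hε).imp fun _ hN m hm n hn =>
    (dist_ext0_le_d0 _ _).trans_lt (hN m hm n hn)

theorem tendsto_d0_of_tendsto {u : ℕ → Lam0 d T} {x : Lam0 d T}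
    (hfst : Tendsto (fun n => (u n).1) atTop (𝓝 x.1))
    (hext : Tendsto (fun n => ext0 (u n)) atTop (𝓝 (ext0 x))) :
    Tendsto (fun n => d0 (u n) x) atTop (𝓝 0) := by
  have := (tendsto_iff_dist_tendsto_zero.1 hfst).sqrt.add (tendsto_iff_dist_tendsto_zero.1 hext)
  simpa [d0, Subtype.dist_eq, Real.dist_eq, abs_sub_comm] using this

end

theorem stmt_2_general (d : ℕ) (T : ℝ) :
    ∀ u : ℕ → Lam0 d T,
      (∀ ε > (0:ℝ), ∃ N : ℕ, ∀ m ≥ N, ∀ n ≥ N, d0 (u m) (u n) < ε) →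
      ∃ x : Lam0 d T, Filter.Tendsto (fun n => d0 (u n) x) Filter.atTop (nhds 0) := by
  intro u hu
  obtain ⟨r, hr⟩ := cauchySeq_tendsto_of_complete (cauchySeq_fst_of_d0 hu)
  obtain ⟨g, hg⟩ := cauchySeq_tendsto_of_complete (cauchySeq_ext0_of_d0 hu)
  have hfrozen : ∀ s, g (min r s) = g s :=
    isClosed_setOf_forall_apply_min_eq.mem_of_tendsto (x := (r, g)) (hr.prodMk_nhds hg)
      (Eventually.of_forall fun n => ext0_apply_min (u n))
  obtain ⟨x, rfl, rfl⟩ := exists_ext0_eq hfrozen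
  exact ⟨x, tendsto_d0_of_tendsto hr hg⟩

/-- the metric space `(Λ^0, d₀)` is complete: every `d₀`-Cauchy sequence of
continuous paths (possibly defined on different time intervals `[0,r_n] ⊆ [0,T]`)
converges in `d₀` to an element of `Λ^0`. -/
theorem stmt_2 (d : ℕ) (hd : 0 < d) (T : ℝ) (hT : 0 < T) :
    ∀ u : ℕ → Lam0 d T,
      (∀ ε > (0:ℝ), ∃ N : ℕ, ∀ m ≥ N, ∀ n ≥ N, d0 (u m) (u n) < ε) →
      ∃ x : Lam0 d T, Filter.Tendsto (fun n => d0 (u n) x) Filter.atTop (nhds 0) :=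
  stmt_2_general d T
end
end

section
/- If f and G are bounded by L and L-Lipschitz in the path variable in sup-norm, then the cost functional J(t, x_t) = ∫_t^T f(s, X^{t,x_t}_s) ds + G(X^{t,x_t}_T) along the path-dependent ODE flow satisfies |J(t,x_t) − J(t,y_t)| ≤ L_V ‖x_t − y_t‖₀ for all x_t, y_t ∈ C([0,t];ℝ^d), where L_V depends only on L and T. -/
/-!
Let `g s = sup_{u ≤ s} ‖X u - Y u‖` be the running sup-distance of the two flows. Because `β` is
`L`-Lipschitz with respect to the path stopped at `s`, `g τ ≤ ‖ξ - η‖ + L ∫_t^τ g`, and Grönwall's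
inequality gives `g T ≤ ‖ξ - η‖ e^{L (T - t)}`. Since `f` and `G` are `L`-Lipschitz in the path, the
two costs differ by at most `L (T - t + 1) g T`.
-/

open Set MeasureTheory Filter Topology

/-- Reduced to the differential Grönwall inequality for `u = c + K ∫_a^· g`: as `g ≥ 0`, `u` is
monotone, so its right difference quotients are at most `K u`. -/
theorem le_mul_exp_of_le_add_integral {g : ℝ → ℝ} {a b c K : ℝ} (hK : 0 ≤ K)
    (hg : IntegrableOn g (Icc a b)) (hg₀ : ∀ s ∈ Icc a b, 0 ≤ g s)
    (h : ∀ τ ∈ Icc a b, g τ ≤ c + K * ∫ s in a..τ, g s) :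
    ∀ τ ∈ Icc a b, g τ ≤ c * Real.exp (K * (τ - a)) := by
  intro τ hτ
  have hab : a ≤ b := hτ.1.trans hτ.2
  set u : ℝ → ℝ := fun τ => c + K * ∫ s in a..τ, g s with hu
  have hg_sub {x y : ℝ} (hx : x ∈ Icc a b) (hy : y ∈ Icc a b) :
      IntervalIntegrable g volume x y :=
    (hg.mono_set (uIcc_subset_Icc hx hy)).intervalIntegrable
  have hu_sub {x y : ℝ} (hx : x ∈ Icc a b) (hy : y ∈ Icc a b) :
      u y - u x = K * ∫ s in x..y, g s := by
    rw [hu, ← intervalIntegral.integral_interval_sub_left (hg_sub (left_mem_Icc.2 hab) hy)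
      (hg_sub (left_mem_Icc.2 hab) hx)]
    ring
  have hu_mono {x y : ℝ} (hx : x ∈ Icc a b) (hy : y ∈ Icc a b) (hxy : x ≤ y) : u x ≤ u y := by
    have : 0 ≤ ∫ s in x..y, g s := intervalIntegral.integral_nonneg hxy
      fun s hs => hg₀ s ⟨hx.1.trans hs.1, hs.2.trans hy.2⟩
    nlinarith [hu_sub hx hy]
  have hu_cont : ContinuousOn u (Icc a b) := by
    refine continuousOn_const.add (continuousOn_const.mul ?_)
    simpa [uIcc_of_le hab] using
      intervalIntegral.continuousOn_primitive_interval (a := a) (b := b) (by rwa [uIcc_of_le hab])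
  have hslope : ∀ x ∈ Ico a b, ∀ r, K * u x < r →
      ∃ᶠ z in 𝓝[>] x, (z - x)⁻¹ * (u z - u x) < r := by
    intro x hx r hr
    have hx' : x ∈ Icc a b := Ico_subset_Icc_self hx
    have hcont : Tendsto (fun z => K * u z) (𝓝[>] x) (𝓝 (K * u x)) :=
      ((hu_cont x hx').mono_of_mem_nhdsWithin (mem_of_superset (Ioc_mem_nhdsGT hx.2)
        (Ioc_subset_Icc_self.trans (Icc_subset_Icc_left hx.1)))).tendsto.const_mul K
    refine Eventually.frequently ?_
    filter_upwards [Ioc_mem_nhdsGT hx.2, hcont.eventually (gt_mem_nhds hr)] with z hz hzr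
    have hz' : z ∈ Icc a b := ⟨hx.1.trans hz.1.le, hz.2⟩
    have hint : ∫ s in x..z, g s ≤ (z - x) * u z := by
      calc ∫ s in x..z, g s ≤ ∫ _ in x..z, u z :=
            intervalIntegral.integral_mono_on hz.1.le (hg_sub hx' hz') intervalIntegrable_const
              fun s hs => (h s ⟨hx.1.trans hs.1, hs.2.trans hz.2⟩).trans
                (hu_mono ⟨hx.1.trans hs.1, hs.2.trans hz.2⟩ hz' hs.2)
        _ = (z - x) * u z := by simp
    rw [hu_sub hx' hz', inv_mul_lt_iff₀ (sub_pos.2 hz.1)]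
    nlinarith [mul_le_mul_of_nonneg_left hint hK, mul_lt_mul_of_pos_left hzr (sub_pos.2 hz.1)]
  calc g τ ≤ u τ := h τ hτ
    _ ≤ gronwallBound c K 0 (τ - a) :=
      le_gronwallBound_of_liminf_deriv_right_le hu_cont hslope (by simp [hu])
        (fun x _ => by simp) τ hτ
    _ = c * Real.exp (K * (τ - a)) := gronwallBound_ε0 _ _ _

theorem intervalIntegrable_of_norm_le {E : Type*} [NormedAddCommGroup E] {F : ℝ → E}
    {a b C : ℝ} (hF : AEStronglyMeasurable F) (hab : a ≤ b) (hC : ∀ s ∈ Icc a b, ‖F s‖ ≤ C) :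
    IntervalIntegrable F volume a b :=
  intervalIntegrable_const.mono_fun' hF.restrict <|
    (ae_restrict_iff' measurableSet_uIoc).2 <| ae_of_all _ fun s hs =>
      hC s (Ioc_subset_Icc_self (by rwa [uIoc_of_le hab] at hs))

theorem norm_integral_sub_integral_le {E : Type*} [NormedAddCommGroup E] [NormedSpace ℝ E]
    {F₁ F₂ : ℝ → E} {g : ℝ → ℝ} {a b K : ℝ} (hab : a ≤ b)
    (hF₁ : IntervalIntegrable F₁ volume a b) (hF₂ : IntervalIntegrable F₂ volume a b)
    (hg : IntervalIntegrable g volume a b) (h : ∀ s ∈ Icc a b, ‖F₁ s - F₂ s‖ ≤ K * g s) :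
    ‖(∫ s in a..b, F₁ s) - ∫ s in a..b, F₂ s‖ ≤ K * ∫ s in a..b, g s := by
  rw [← intervalIntegral.integral_sub hF₁ hF₂, ← intervalIntegral.integral_const_mul]
  exact intervalIntegral.norm_integral_le_of_norm_le hab
    (ae_of_all _ fun s hs => h s (Ioc_subset_Icc_self hs)) (hg.const_mul K)

section SupDist

variable {E : Type*} [NormedAddCommGroup E] {T : ℝ}

/-- The sup-distance of the paths stopped at `s` (`0` for `s < 0`, as an empty real supremum). -/
noncomputable def supDistUpTo (x y : C(Icc (0:ℝ) T, E)) (s : ℝ) : ℝ :=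
  ⨆ u : {u : Icc (0:ℝ) T // (u:ℝ) ≤ s}, ‖x u.1 - y u.1‖

variable (x y : C(Icc (0:ℝ) T, E))

theorem supDistUpTo_nonneg (s : ℝ) : 0 ≤ supDistUpTo x y s :=
  Real.iSup_nonneg fun _ => norm_nonneg _

theorem norm_sub_le_supDistUpTo {u : Icc (0:ℝ) T} {s : ℝ} (hu : (u:ℝ) ≤ s) :
    ‖x u - y u‖ ≤ supDistUpTo x y s := by
  refine le_ciSup (f := fun u : {u : Icc (0:ℝ) T // (u:ℝ) ≤ s} => ‖x u.1 - y u.1‖)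
    ⟨‖x - y‖, ?_⟩ ⟨u, hu⟩
  rintro _ ⟨v, rfl⟩
  exact (x - y).norm_coe_le_norm v.1

theorem supDistUpTo_le {s C : ℝ} (hC : 0 ≤ C)
    (h : ∀ u : Icc (0:ℝ) T, (u:ℝ) ≤ s → ‖x u - y u‖ ≤ C) : supDistUpTo x y s ≤ C :=
  Real.iSup_le (fun u => h u.1 u.2) hC

theorem monotone_supDistUpTo : Monotone (supDistUpTo x y) := fun _ _ hss' =>
  supDistUpTo_le x y (supDistUpTo_nonneg x y _) fun _ hu =>
    norm_sub_le_supDistUpTo x y (hu.trans hss')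

theorem norm_sub_le_supDistUpTo_of_le {s : ℝ} (hs : T ≤ s) : ‖x - y‖ ≤ supDistUpTo x y s :=
  (ContinuousMap.norm_le _ (supDistUpTo_nonneg x y s)).2 fun u =>
    norm_sub_le_supDistUpTo x y (u.2.2.trans hs)

end SupDist

section PathDependentODE

variable {E : Type*} [NormedAddCommGroup E] {T t L : ℝ} {X Y : C(Icc (0:ℝ) T, E)}

theorem supDistUpTo_le_mul_exp [NormedSpace ℝ E] {β : ℝ → C(Icc (0:ℝ) T, E) → E}
    {x₀ y₀ : E} {c : ℝ} (ht : t ∈ Icc 0 T) (hL : 0 ≤ L)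
    (hβX : IntervalIntegrable (fun s => β s X) volume t T)
    (hβY : IntervalIntegrable (fun s => β s Y) volume t T)
    (hβ : ∀ s ∈ Icc t T, ‖β s X - β s Y‖ ≤ L * supDistUpTo X Y s)
    (hinit : ∀ u : Icc (0:ℝ) T, (u:ℝ) ≤ t → ‖X u - Y u‖ ≤ c) (h₀ : ‖x₀ - y₀‖ ≤ c)
    (hX : ∀ τ : Icc (0:ℝ) T, t ≤ τ → X τ = x₀ + ∫ s in t..τ, β s X)
    (hY : ∀ τ : Icc (0:ℝ) T, t ≤ τ → Y τ = y₀ + ∫ s in t..τ, β s Y) :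
    supDistUpTo X Y T ≤ c * Real.exp (L * (T - t)) := by
  set g := supDistUpTo X Y
  have hg_mono : Monotone g := monotone_supDistUpTo X Y
  have hg₀ : ∀ s, 0 ≤ g s := supDistUpTo_nonneg X Y
  have hint_nonneg {v : ℝ} (hv : t ≤ v) : 0 ≤ ∫ s in t..v, g s :=
    intervalIntegral.integral_nonneg hv fun s _ => hg₀ s
  have hkey : ∀ τ ∈ Icc t T, g τ ≤ c + L * ∫ s in t..τ, g s := by
    intro τ hτ
    have hc : 0 ≤ c := (norm_nonneg _).trans h₀
    refine supDistUpTo_le X Y (by have := hint_nonneg hτ.1; positivity) fun u hu => ?_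
    rcases le_total (u:ℝ) t with hut | htu
    · exact (hinit u hut).trans (le_add_of_nonneg_right (mul_nonneg hL (hint_nonneg hτ.1)))
    have hsub : uIcc t (u:ℝ) ⊆ uIcc t T := uIcc_subset_uIcc_left (Icc_subset_uIcc ⟨htu, u.2.2⟩)
    calc ‖X u - Y u‖
        = ‖(x₀ - y₀) + ((∫ s in t..(u:ℝ), β s X) - ∫ s in t..(u:ℝ), β s Y)‖ := by
          rw [hX u htu, hY u htu]; congr 1; abel
      _ ≤ ‖x₀ - y₀‖ + ‖(∫ s in t..(u:ℝ), β s X) - ∫ s in t..(u:ℝ), β s Y‖ := norm_add_le _ _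
      _ ≤ c + L * ∫ s in t..(u:ℝ), g s :=
          add_le_add h₀ (norm_integral_sub_integral_le htu (hβX.mono_set hsub)
            (hβY.mono_set hsub) hg_mono.intervalIntegrable
            fun s hs => hβ s ⟨hs.1, hs.2.trans u.2.2⟩)
      _ ≤ c + L * ∫ s in t..τ, g s := by
          gcongr
          exact intervalIntegral.integral_mono_interval le_rfl htu hu
            (ae_of_all _ fun s => hg₀ s) hg_mono.intervalIntegrable
  exact le_mul_exp_of_le_add_integral hL
    ((hg_mono.monotoneOn _).integrableOn_isCompact isCompact_Icc) (fun s _ => hg₀ s) hkey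
    T ⟨ht.2, le_rfl⟩

theorem abs_cost_sub_le {f : ℝ → C(Icc (0:ℝ) T, E) → ℝ} {G : C(Icc (0:ℝ) T, E) → ℝ}
    (ht : t ≤ T) (hL : 0 ≤ L)
    (hfX : IntervalIntegrable (fun s => f s X) volume t T)
    (hfY : IntervalIntegrable (fun s => f s Y) volume t T)
    (hf : ∀ s ∈ Icc t T, |f s X - f s Y| ≤ L * supDistUpTo X Y s)
    (hG : |G X - G Y| ≤ L * ‖X - Y‖) :
    |((∫ s in t..T, f s X) + G X) - ((∫ s in t..T, f s Y) + G Y)| ≤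
      L * (T - t + 1) * supDistUpTo X Y T := by
  set D := supDistUpTo X Y T
  have hrun : |(∫ s in t..T, f s X) - ∫ s in t..T, f s Y| ≤ L * ((T - t) * D) := by
    simpa [ht] using norm_integral_sub_integral_le (g := fun _ => D) ht hfX hfY
      intervalIntegrable_const fun s hs =>
        (hf s hs).trans (by gcongr; exact monotone_supDistUpTo X Y hs.2)
  have hterm : |G X - G Y| ≤ L * D :=
    hG.trans (by gcongr; exact norm_sub_le_supDistUpTo_of_le X Y le_rfl)
  calc |((∫ s in t..T, f s X) + G X) - ((∫ s in t..T, f s Y) + G Y)|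
      = |((∫ s in t..T, f s X) - ∫ s in t..T, f s Y) + (G X - G Y)| := by ring_nf
    _ ≤ |(∫ s in t..T, f s X) - ∫ s in t..T, f s Y| + |G X - G Y| := abs_add_le _ _
    _ ≤ L * ((T - t) * D) + L * D := add_le_add hrun hterm
    _ = L * (T - t + 1) * D := by ring

end PathDependentODE

/-- if `f` and `G` are bounded by `L` and `L`-Lipschitz in the path in
sup-norm, then the cost functional
`J(t,x_t) = ∫_t^T f(s, X^{t,x_t}_s) ds + G(X^{t,x_t}_T)` along the path-dependent ODE
flow is Lipschitz in the initial path: `|J(t,x_t) − J(t,y_t)| ≤ L_V ‖x_t − y_t‖₀`,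
where `L_V` depends only on `L` and `T`. -/
theorem stmt_12 (T L : ℝ) (hT : 0 < T) (hL : 0 < L) :
    ∃ LV : ℝ, 0 < LV ∧
      ∀ (d : ℕ) (t : ℝ) (ht : t ∈ Set.Icc (0:ℝ) T)
        (β : ℝ → C(Set.Icc (0:ℝ) T, EuclideanSpace ℝ (Fin d)) → EuclideanSpace ℝ (Fin d))
        (f : ℝ → C(Set.Icc (0:ℝ) T, EuclideanSpace ℝ (Fin d)) → ℝ)
        (G : C(Set.Icc (0:ℝ) T, EuclideanSpace ℝ (Fin d)) → ℝ),
        (∀ x, Measurable fun s => β s x) →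
        (∀ s ∈ Set.Icc (0:ℝ) T,
          ∀ x y, (∀ u : Set.Icc (0:ℝ) T, (u:ℝ) ≤ s → x u = y u) → β s x = β s y) →
        (∀ s ∈ Set.Icc (0:ℝ) T, ∀ x, ‖β s x‖ ≤ L) →
        (∀ s ∈ Set.Icc (0:ℝ) T, ∀ x y,
          ‖β s x - β s y‖ ≤ L * ⨆ u : {u : Set.Icc (0:ℝ) T // (u:ℝ) ≤ s}, ‖x u.1 - y u.1‖) →
        (∀ x, Measurable fun s => f s x) →
        (∀ s ∈ Set.Icc (0:ℝ) T,
          ∀ x y, (∀ u : Set.Icc (0:ℝ) T, (u:ℝ) ≤ s → x u = y u) → f s x = f s y) →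
        (∀ s ∈ Set.Icc (0:ℝ) T, ∀ x, |f s x| ≤ L) →
        (∀ s ∈ Set.Icc (0:ℝ) T, ∀ x y,
          |f s x - f s y| ≤ L * ⨆ u : {u : Set.Icc (0:ℝ) T // (u:ℝ) ≤ s}, ‖x u.1 - y u.1‖) →
        (∀ x, |G x| ≤ L) →
        (∀ x y, |G x - G y| ≤ L * ‖x - y‖) →
        ∀ (ξ η : C(Set.Icc (0:ℝ) t, EuclideanSpace ℝ (Fin d)))
          (X Y : C(Set.Icc (0:ℝ) T, EuclideanSpace ℝ (Fin d))),
          (∀ u : Set.Icc (0:ℝ) T, ∀ h : (u:ℝ) ≤ t, X u = ξ ⟨(u:ℝ), ⟨u.2.1, h⟩⟩) →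
          (∀ τ : Set.Icc (0:ℝ) T, t ≤ (τ:ℝ) →
            X τ = ξ ⟨t, ⟨ht.1, le_rfl⟩⟩ + ∫ s' in t..(τ:ℝ), β s' X) →
          (∀ u : Set.Icc (0:ℝ) T, ∀ h : (u:ℝ) ≤ t, Y u = η ⟨(u:ℝ), ⟨u.2.1, h⟩⟩) →
          (∀ τ : Set.Icc (0:ℝ) T, t ≤ (τ:ℝ) →
            Y τ = η ⟨t, ⟨ht.1, le_rfl⟩⟩ + ∫ s' in t..(τ:ℝ), β s' Y) →
          |((∫ s' in t..T, f s' X) + G X) - ((∫ s' in t..T, f s' Y) + G Y)| ≤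
            LV * ‖ξ - η‖ := by
  refine ⟨L * (T + 1) * Real.exp (L * T), by positivity, ?_⟩
  intro d t ht β f G hβ_meas _ hβ_bdd hβ_lip hf_meas _ hf_bdd hf_lip _ hG_lip ξ η X Y
    hX_init hX hY_init hY
  have hIcc : ∀ s ∈ Icc t T, s ∈ Icc (0:ℝ) T := fun s hs => ⟨ht.1.trans hs.1, hs.2⟩
  have hξη (p : Icc (0:ℝ) t) : ‖ξ p - η p‖ ≤ ‖ξ - η‖ := (ξ - η).norm_coe_le_norm p
  have hdist : supDistUpTo X Y T ≤ ‖ξ - η‖ * Real.exp (L * (T - t)) :=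
    supDistUpTo_le_mul_exp ht hL.le
      (intervalIntegrable_of_norm_le (hβ_meas X).aestronglyMeasurable ht.2
        fun s hs => hβ_bdd s (hIcc s hs) X)
      (intervalIntegrable_of_norm_le (hβ_meas Y).aestronglyMeasurable ht.2
        fun s hs => hβ_bdd s (hIcc s hs) Y)
      (fun s hs => hβ_lip s (hIcc s hs) X Y)
      (fun u hu => by rw [hX_init u hu, hY_init u hu]; exact hξη _) (hξη _) hX hY
  have hcost := abs_cost_sub_le ht.2 hL.le
    (intervalIntegrable_of_norm_le (hf_meas X).aestronglyMeasurable ht.2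
      fun s hs => hf_bdd s (hIcc s hs) X)
    (intervalIntegrable_of_norm_le (hf_meas Y).aestronglyMeasurable ht.2
      fun s hs => hf_bdd s (hIcc s hs) Y)
    (fun s hs => hf_lip s (hIcc s hs) X Y) (hG_lip X Y)
  have hexp : Real.exp (L * (T - t)) ≤ Real.exp (L * T) := by gcongr; linarith [ht.1]
  calc _ ≤ L * (T - t + 1) * supDistUpTo X Y T := hcost
    _ ≤ L * (T + 1) * (‖ξ - η‖ * Real.exp (L * T)) :=
        mul_le_mul (by nlinarith [ht.1]) (hdist.trans (by gcongr)) (supDistUpTo_nonneg X Y T)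
          (by positivity)
    _ = L * (T + 1) * Real.exp (L * T) * ‖ξ - η‖ := by ring
end

section
/- Generalized Itô–Kunita / chain rule for vertically differentiable deterministic path functionals: if u : [0,T] × Λ → ℝ satisfies the horizontal-extension identity u(τ, x_{ρ,τ−ρ}) = u(ρ, x_ρ) + ∫_ρ^τ 𝔡_s u(s, x_{ρ,s−ρ}) ds for all ρ ≤ τ and has a vertical gradient ∇u that is continuous and bounded, then along any solution X of dX/dt = β(t,X_t) with X = x_ρ on [0,ρ] one has u(τ, X_τ) − u(ρ, x_ρ) = ∫_ρ^τ [ 𝔡_s u(s, X_s) + β(s,X_s)·∇u(s,X_s) ] ds. -/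
/-
Freeze `X` on a grid `ρ = t₀ ≤ ⋯ ≤ tₙ = τ` of small mesh: the step path `wᵢ` follows `X` up to
`t₀` and jumps to `X(tⱼ)` at every grid time `tⱼ ≤ tᵢ`. Going from `u(tᵢ, wᵢ)` to
`u(tᵢ₊₁, wᵢ₊₁)` is a horizontal extension of `wᵢ`, whose increment is exactly `∫ 𝔡u`, followed by
a vertical jump `X(tᵢ₊₁) - X(tᵢ) = ∫ β` at the endpoint, whose increment the mean value
inequality compares with `⟪∇u, ∫ β⟫`. The step paths stay uniformly close to the frozen paths
`X_t`, and `𝔡u`, `∇u` are uniformly continuous along the compact family `t ↦ X_t`, so each cell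
contributes an error `o(tᵢ₊₁ - tᵢ)`. Summing the cells, and using the continuity of `u` for the
last step `wₙ ≈ X_τ`, the error is `O(ε)` for every `ε > 0`.
-/

open Set MeasureTheory

noncomputable section

/-- Horizontal freezing of a path at time `t`: `(frz x t)(s) = x(s ∧ t)`; this encodes the
horizontal extension `x_{t,δ}` of a path and the restriction `x_t` as total functions. -/
def frz {d : ℕ} (x : ℝ → EuclideanSpace ℝ (Fin d)) (t : ℝ) : ℝ → EuclideanSpace ℝ (Fin d) :=
  fun s => x (min s t)

open scoped NNReal

section SupContinuity

variable {E F : Type*} [NormedAddCommGroup E] [NormedAddCommGroup F]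

def SupContinuousOn (f : ℝ → (ℝ → E) → F) (I : Set ℝ) : Prop :=
  ∀ t ∈ I, ∀ x, ∀ ε > (0:ℝ), ∃ η > (0:ℝ), ∀ t' ∈ I, ∀ y,
    |t' - t| ≤ η → (∀ s, ‖y s - x s‖ ≤ η) → ‖f t' y - f t x‖ ≤ ε

variable {f : ℝ → (ℝ → E) → F} {I J : Set ℝ} {γ : ℝ → ℝ → E} {M : ℝ}

theorem SupContinuousOn.continuousOn_comp (hf : SupContinuousOn f I) (hJI : J ⊆ I)
    (hM : 0 ≤ M) (hγ : ∀ a ∈ J, ∀ b ∈ J, ∀ s, ‖γ a s - γ b s‖ ≤ M * |a - b|) :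
    ContinuousOn (fun t => f t (γ t)) J := by
  intro t ht
  rw [Metric.continuousWithinAt_iff]
  intro ε hε
  obtain ⟨η, hη, H⟩ := hf t (hJI ht) (γ t) (ε / 2) (half_pos hε)
  refine ⟨η / (M + 1), by positivity, fun {t'} ht' hdist => ?_⟩
  rw [Real.dist_eq] at hdist
  have hclose : (M + 1) * |t' - t| ≤ η := by
    rw [lt_div_iff₀ (by positivity)] at hdist; linarith
  rw [dist_eq_norm]
  refine (H t' (hJI ht') (γ t') (by nlinarith [abs_nonneg (t' - t)]) fun s => ?_).trans_lt
    (half_lt_self hε)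
  exact (hγ t' ht' t ht s).trans (by nlinarith [abs_nonneg (t' - t)])

theorem SupContinuousOn.exists_uniform_modulus (hf : SupContinuousOn f I) {K : Set ℝ}
    (hK : IsCompact K) (hKI : K ⊆ I) (hM : 0 ≤ M)
    (hγ : ∀ a ∈ K, ∀ b ∈ K, ∀ s, ‖γ a s - γ b s‖ ≤ M * |a - b|) {ε : ℝ} (hε : 0 < ε) :
    ∃ η > (0:ℝ), ∀ t ∈ K, ∀ t' ∈ I, ∀ y, |t' - t| ≤ η → (∀ s, ‖y s - γ t s‖ ≤ η) →
      ‖f t' y - f t (γ t)‖ ≤ ε := by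
  choose η hη H using fun i : K => hf i (hKI i.2) (γ i) (ε / 2) (half_pos hε)
  set r : K → ℝ := fun i => η i / (2 * (M + 1))
  have hr : ∀ i, 0 < r i := fun i => by have := hη i; positivity
  have hηr : ∀ i, η i = 2 * (M + 1) * r i := fun i => by
    simp only [r]; field_simp
  obtain ⟨δ, hδ, hball⟩ := lebesgue_number_lemma_of_metric hK
    (c := fun i : K => Metric.ball (i : ℝ) (r i)) (fun _ => Metric.isOpen_ball)
    fun t ht => mem_iUnion.2 ⟨⟨t, ht⟩, Metric.mem_ball_self (hr _)⟩
  refine ⟨δ / 2, half_pos hδ, fun t ht t' ht' y hty hy => ?_⟩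
  obtain ⟨i, hi⟩ := hball t ht
  have hmem : ∀ c, |c| < δ → |t + c - i| < r i := fun c hc => by
    have := hi (show t + c ∈ Metric.ball t δ by simpa [Real.dist_eq] using hc)
    rwa [Metric.mem_ball, Real.dist_eq] at this
  have hti : |t - i| < r i := by simpa using hmem 0 (by simpa using hδ)
  have hδr : δ < 2 * r i := by
    have h₁ := hmem (δ / 2) (by rw [abs_of_pos (half_pos hδ)]; linarith)
    have h₂ := hmem (-(δ / 2)) (by rw [abs_neg, abs_of_pos (half_pos hδ)]; linarith)
    rw [abs_lt] at h₁ h₂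
    linarith
  have hMr : 0 ≤ M * r i := mul_nonneg hM (hr i).le
  have hγti : ∀ s, ‖γ t s - γ i s‖ ≤ M * r i := fun s =>
    (hγ t ht i i.2 s).trans (mul_le_mul_of_nonneg_left hti.le hM)
  have h₁ : ‖f t' y - f i (γ i)‖ ≤ ε / 2 := by
    refine H i t' ht' y ?_ fun s => ?_
    · calc |t' - i| ≤ |t' - t| + |t - i| := abs_sub_le _ _ _
        _ ≤ η i := by rw [hηr]; nlinarith
    · calc ‖y s - γ i s‖ ≤ ‖y s - γ t s‖ + ‖γ t s - γ i s‖ :=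
          norm_sub_le_norm_sub_add_norm_sub _ _ _
        _ ≤ η i := by rw [hηr]; nlinarith [hy s, hγti s]
  have h₂ : ‖f t (γ t) - f i (γ i)‖ ≤ ε / 2 :=
    H i t (hKI ht) (γ t) (by rw [hηr]; nlinarith) fun s => by rw [hηr]; nlinarith [hγti s]
  calc ‖f t' y - f t (γ t)‖ ≤ ‖f t' y - f i (γ i)‖ + ‖f t (γ t) - f i (γ i)‖ := by
        rw [norm_sub_rev (f t (γ t))]; exact norm_sub_le_norm_sub_add_norm_sub _ _ _
    _ ≤ ε := by linarith

end SupContinuity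

section Vertical

variable {E : Type*} [NormedAddCommGroup E] [InnerProductSpace ℝ E]

theorem hasFDerivAt_update_add {F : Type*} [NormedAddCommGroup F] [NormedSpace ℝ F]
    {U : (ℝ → E) → F} {D : (ℝ → E) → E →L[ℝ] F} {t : ℝ}
    (hU : ∀ x, HasFDerivAt (fun h => U (Function.update x t (x t + h))) (D x) 0)
    (x : ℝ → E) (v : E) :
    HasFDerivAt (fun h => U (Function.update x t (x t + h)))
      (D (Function.update x t (x t + v))) v := by
  have := hU (Function.update x t (x t + v))
  simp only [Function.update_self, Function.update_idem, add_assoc] at this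
  simpa using (hasFDerivAt_comp_add_left (f := fun h => U (Function.update x t (x t + h)))
    (x := 0) v).1 this

theorem abs_sub_sub_inner_le_of_hasFDerivAt_update {U : (ℝ → E) → ℝ} {D : (ℝ → E) → E}
    {t C : ℝ} (hU : ∀ x, HasFDerivAt (fun h => U (Function.update x t (x t + h)))
      (innerSL ℝ (D x)) 0)
    (x : ℝ → E) {Δ D₀ : E}
    (hD : ∀ v ∈ segment ℝ 0 Δ, ‖D (Function.update x t (x t + v)) - D₀‖ ≤ C) :
    |U (Function.update x t (x t + Δ)) - U x - inner ℝ D₀ Δ| ≤ C * ‖Δ‖ := by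
  have := (convex_segment (0 : E) Δ).norm_image_sub_le_of_norm_hasFDerivWithin_le'
    (f := fun h => U (Function.update x t (x t + h))) (φ := innerSL ℝ D₀)
    (fun v _ => (hasFDerivAt_update_add hU x v).hasFDerivWithinAt)
    (fun v hv => by rw [← map_sub, innerSL_apply_norm]; exact hD v hv)
    (left_mem_segment ℝ 0 Δ) (right_mem_segment ℝ 0 Δ)
  simpa using this

end Vertical

section Integrals

variable {E : Type*} [NormedAddCommGroup E]

theorem intervalIntegrable_of_norm_le_const {g : ℝ → E}
    {a b C : ℝ} (hg : AEStronglyMeasurable g) (hgC : ∀ s ∈ uIoc a b, ‖g s‖ ≤ C) :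
    IntervalIntegrable g volume a b :=
  (intervalIntegrable_const (c := C)).mono_fun' hg.restrict
    (ae_restrict_of_forall_mem measurableSet_uIoc hgC)

variable [InnerProductSpace ℝ E]

theorem IntervalIntegrable.inner_continuousOn {g W : ℝ → E} {a b : ℝ}
    (hg : IntervalIntegrable g volume a b) (hW : ContinuousOn W (uIcc a b)) :
    IntervalIntegrable (fun s => inner ℝ (g s) (W s)) volume a b := by
  obtain ⟨C, hC⟩ := isCompact_uIcc.exists_bound_of_continuousOn hW
  rw [intervalIntegrable_iff] at hg ⊢
  refine (hg.norm.const_mul C).mono' (hg.aestronglyMeasurable.inner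
    ((hW.mono uIoc_subset_uIcc).aestronglyMeasurable measurableSet_uIoc))
    (ae_restrict_of_forall_mem measurableSet_uIoc fun s hs => ?_)
  calc ‖inner ℝ (g s) (W s)‖ ≤ ‖g s‖ * ‖W s‖ := norm_inner_le_norm _ _
    _ ≤ C * ‖g s‖ := by
      rw [mul_comm]; exact mul_le_mul_of_nonneg_right (hC s (uIoc_subset_uIcc hs)) (norm_nonneg _)

variable [CompleteSpace E]

theorem abs_inner_integral_sub_integral_inner_le {g W : ℝ → E} {a b L ε : ℝ} {D₀ : E}
    (hg : IntervalIntegrable g volume a b)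
    (hgW : IntervalIntegrable (fun s => inner ℝ (g s) (W s)) volume a b)
    (hgL : ∀ s ∈ uIoc a b, ‖g s‖ ≤ L) (hW : ∀ s ∈ uIoc a b, ‖W s - D₀‖ ≤ ε) :
    |inner ℝ D₀ (∫ s in a..b, g s) - ∫ s in a..b, inner ℝ (g s) (W s)| ≤ L * ε * |b - a| := by
  have hcomm : inner ℝ D₀ (∫ s in a..b, g s) = ∫ s in a..b, inner ℝ (g s) D₀ := by
    simpa only [innerSL_apply_apply, real_inner_comm D₀] using
      ((innerSL ℝ D₀).intervalIntegral_comp_comm hg).symm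
  rw [hcomm, ← intervalIntegral.integral_sub (hg.inner_continuousOn continuousOn_const) hgW,
    ← Real.norm_eq_abs]
  refine intervalIntegral.norm_integral_le_of_norm_le_const fun s hs => ?_
  rw [← inner_sub_right]
  exact (norm_inner_le_norm _ _).trans (mul_le_mul (hgL s hs) (norm_sub_rev (W s) D₀ ▸ hW s hs)
    (norm_nonneg _) ((norm_nonneg _).trans (hgL s hs)))

theorem abs_update_sub_sub_integral_le {u du : ℝ → (ℝ → E) → ℝ} {Du : ℝ → (ℝ → E) → E}
    {g : ℝ → E} {γ : ℝ → ℝ → E} {w : ℝ → E} {a b ε L : ℝ} {D₀ : E} (hab : a ≤ b)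
    (hhor : u b w = u a w + ∫ s in a..b, du s w)
    (hvert : ∀ x, HasFDerivAt (fun h => u b (Function.update x b (x b + h)))
      (innerSL ℝ (Du b x)) 0)
    (hgL : ∀ s ∈ Ioc a b, ‖g s‖ ≤ L)
    (hdu : ∀ s ∈ Ioc a b, |du s w - du s (γ s)| ≤ ε)
    (hDu : ∀ s ∈ Ioc a b, ‖Du s (γ s) - D₀‖ ≤ ε)
    (hDuv : ∀ v ∈ segment ℝ 0 (∫ s in a..b, g s),
      ‖Du b (Function.update w b (w b + v)) - D₀‖ ≤ ε)
    (hduw : IntervalIntegrable (fun s => du s w) volume a b)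
    (hduγ : IntervalIntegrable (fun s => du s (γ s)) volume a b)
    (hg : IntervalIntegrable g volume a b)
    (hgDu : IntervalIntegrable (fun s => inner ℝ (g s) (Du s (γ s))) volume a b) :
    |u b (Function.update w b (w b + ∫ s in a..b, g s)) - u a w -
        ∫ s in a..b, (du s (γ s) + inner ℝ (g s) (Du s (γ s)))| ≤ ε * (1 + 2 * L) * (b - a) := by
  set Δ := ∫ s in a..b, g s
  have hI : uIoc a b = Ioc a b := uIoc_of_le hab
  have hε : 0 ≤ ε := (norm_nonneg _).trans (hDuv 0 (left_mem_segment ℝ 0 Δ))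
  have hΔ : ‖Δ‖ ≤ L * (b - a) := by
    simpa [abs_of_nonneg (sub_nonneg.2 hab)] using
      intervalIntegral.norm_integral_le_of_norm_le_const fun s hs => hgL s (hI ▸ hs)
  have hvertical := abs_sub_sub_inner_le_of_hasFDerivAt_update hvert w hDuv
  have hhorizontal : |(∫ s in a..b, du s w) - ∫ s in a..b, du s (γ s)| ≤ ε * (b - a) := by
    rw [← intervalIntegral.integral_sub hduw hduγ, ← Real.norm_eq_abs]
    simpa [abs_of_nonneg (sub_nonneg.2 hab)] using
      intervalIntegral.norm_integral_le_of_norm_le_const (f := fun s => du s w - du s (γ s))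
        fun s hs => hdu s (hI ▸ hs)
  have hdrift := abs_inner_integral_sub_integral_inner_le hg hgDu
    (fun s hs => hgL s (hI ▸ hs)) (fun s hs => hDu s (hI ▸ hs))
  rw [abs_of_nonneg (sub_nonneg.2 hab)] at hdrift
  rw [intervalIntegral.integral_add hduγ hgDu]
  have hεΔ : ε * ‖Δ‖ ≤ ε * (L * (b - a)) := mul_le_mul_of_nonneg_left hΔ hε
  rw [abs_le] at hvertical hhorizontal hdrift ⊢
  constructor <;> linarith

end Integrals

section StepPath

variable {E : Type*}

def stepPath (x : ℝ → E) (t : ℕ → ℝ) : ℕ → ℝ → E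
  | 0 => fun s => x (min s (t 0))
  | i + 1 => fun s => if s < t (i + 1) then stepPath x t i s else x (t (i + 1))

variable {x : ℝ → E} {t : ℕ → ℝ}

theorem stepPath_of_le {i : ℕ} {s : ℝ} (hs : t i ≤ s) : stepPath x t i s = x (t i) := by
  cases i with
  | zero => simp [stepPath, min_eq_right hs]
  | succ i => simp [stepPath, not_lt.2 hs]

theorem stepPath_succ_of_le {i : ℕ} {s : ℝ} (hs : s ≤ t (i + 1)) :
    stepPath x t (i + 1) s = Function.update (stepPath x t i) (t (i + 1)) (x (t (i + 1))) s := by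
  rcases hs.lt_or_eq with hs | rfl
  · simp [stepPath, hs, hs.ne]
  · simp [stepPath]

theorem norm_stepPath_sub_le [NormedAddCommGroup E] {δ : ℝ} (hδ : 0 ≤ δ) {i : ℕ}
    (hx : ∀ j < i, ∀ s ∈ Icc (t j) (t (j + 1)), ‖x s - x (t j)‖ ≤ δ) (s : ℝ) :
    ‖stepPath x t i s - x (min s (t i))‖ ≤ δ := by
  induction i generalizing s with
  | zero => simpa [stepPath] using hδ
  | succ i ih =>
    rcases lt_or_ge s (t (i + 1)) with hs | hs
    · simp only [stepPath, if_pos hs, min_eq_left hs.le]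
      rcases le_or_gt s (t i) with hsi | hsi
      · simpa [min_eq_left hsi] using ih (fun j hj => hx j (by omega)) s
      · rw [stepPath_of_le hsi.le, norm_sub_rev]
        exact hx i (by omega) s ⟨hsi.le, hs.le⟩
    · simpa [stepPath_of_le hs, min_eq_right hs] using hδ

end StepPath

theorem abs_sub_sub_integral_le_of_forall_step {φ t : ℕ → ℝ} {f : ℝ → ℝ} {n : ℕ} {C : ℝ}
    (hf : ∀ i < n, IntervalIntegrable f volume (t i) (t (i + 1)))
    (hstep : ∀ i < n, |φ (i + 1) - φ i - ∫ s in t i..t (i + 1), f s| ≤ C * (t (i + 1) - t i)) :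
    |φ n - φ 0 - ∫ s in t 0..t n, f s| ≤ C * (t n - t 0) := by
  rw [← intervalIntegral.sum_integral_adjacent_intervals hf, ← Finset.sum_range_sub φ,
    ← Finset.sum_range_sub t, Finset.mul_sum, ← Finset.sum_sub_distrib]
  exact (Finset.abs_sum_le_sum_abs _ _).trans
    (Finset.sum_le_sum fun i hi => hstep i (Finset.mem_range.1 hi))

theorem exists_grid {a b h : ℝ} (hab : a ≤ b) (hh : 0 < h) :
    ∃ (n : ℕ) (t : ℕ → ℝ), t 0 = a ∧ t n = b ∧ Monotone t ∧ (∀ i, t i ∈ Icc a b) ∧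
      ∀ i, t (i + 1) - t i ≤ h := by
  refine ⟨⌈(b - a) / h⌉₊, fun i => min b (a + i * h), by simp [hab], ?_, ?_, ?_, ?_⟩
  · have := Nat.le_ceil ((b - a) / h)
    rw [div_le_iff₀ hh] at this
    exact min_eq_left (by linarith)
  · intro i j hij
    have : (i : ℝ) ≤ j := by exact_mod_cast hij
    dsimp only
    gcongr
  · intro i
    exact ⟨le_min hab (by nlinarith [(Nat.cast_nonneg i : (0:ℝ) ≤ i)]), min_le_left _ _⟩
  · intro i
    have := abs_min_sub_min_le_max b (a + (i + 1 : ℕ) * h) b (a + i * h)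
    push_cast at this ⊢
    rw [sub_self, abs_zero, show a + (i + 1) * h - (a + i * h) = h by ring, abs_of_pos hh,
      max_eq_right hh.le] at this
    exact (le_abs_self _).trans this

theorem lipschitzOnWith_of_eq_add_integral {E : Type*} [NormedAddCommGroup E] [NormedSpace ℝ E]
    {X g : ℝ → E} {K : ℝ≥0} {ρ T : ℝ}
    (hX : ∀ a b, ρ ≤ a → a ≤ b → b ≤ T → X b = X a + ∫ s in a..b, g s)
    (hg : ∀ s ∈ Icc ρ T, ‖g s‖ ≤ K) : LipschitzOnWith K X (Icc ρ T) := by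
  refine LipschitzOnWith.of_dist_le_mul fun a ha b hb => ?_
  wlog hab : a ≤ b generalizing a b
  · rw [dist_comm, dist_comm a]; exact this b hb a ha (le_of_not_ge hab)
  rw [dist_comm, dist_eq_norm, hX a b ha.1 hab hb.2, add_sub_cancel_left, dist_comm,
    Real.dist_eq]
  exact intervalIntegral.norm_integral_le_of_norm_le_const fun s hs => by
    rw [uIoc_of_le hab] at hs
    exact hg s ⟨ha.1.trans hs.1.le, hs.2.trans hb.2⟩

theorem norm_frz_sub_frz_le {d : ℕ} {X : ℝ → EuclideanSpace ℝ (Fin d)} {K : ℝ≥0} {ρ T a b : ℝ}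
    (hX : LipschitzOnWith K X (Icc ρ T)) (ha : a ∈ Icc ρ T) (hb : b ∈ Icc ρ T) (s : ℝ) :
    ‖frz X a s - frz X b s‖ ≤ K * |a - b| := by
  rcases le_or_gt s ρ with hs | hs
  · simp only [frz, min_eq_left (hs.trans ha.1), min_eq_left (hs.trans hb.1), sub_self,
      norm_zero]
    positivity
  have hmem : ∀ c ∈ Icc ρ T, min s c ∈ Icc ρ T := fun c hc =>
    ⟨le_min hs.le hc.1, (min_le_right _ _).trans hc.2⟩
  refine (hX.norm_sub_le (hmem a ha) (hmem b hb)).trans (mul_le_mul_of_nonneg_left ?_ K.2)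
  simpa using abs_min_sub_min_le_max s a s b

section PathFunctionals

variable {d : ℕ}

def IsHorizontalDeriv (u du : ℝ → (ℝ → EuclideanSpace ℝ (Fin d)) → ℝ) (T : ℝ) : Prop :=
  ∀ ρ τ : ℝ, 0 ≤ ρ → ρ ≤ τ → τ ≤ T → ∀ x : ℝ → EuclideanSpace ℝ (Fin d),
    u τ (frz x ρ) = u ρ (frz x ρ) + ∫ s in ρ..τ, du s (frz x ρ)

def IsVerticalGradient (u : ℝ → (ℝ → EuclideanSpace ℝ (Fin d)) → ℝ)
    (Du : ℝ → (ℝ → EuclideanSpace ℝ (Fin d)) → EuclideanSpace ℝ (Fin d)) (t : ℝ) : Prop :=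
  ∀ x, HasFDerivAt (fun h => u t (Function.update x t (x t + h))) (innerSL ℝ (Du t x)) 0

variable {T L ε η a b : ℝ} {β : ℝ → (ℝ → EuclideanSpace ℝ (Fin d)) → EuclideanSpace ℝ (Fin d)}
  {u du : ℝ → (ℝ → EuclideanSpace ℝ (Fin d)) → ℝ}
  {Du : ℝ → (ℝ → EuclideanSpace ℝ (Fin d)) → EuclideanSpace ℝ (Fin d)}
  {X w : ℝ → EuclideanSpace ℝ (Fin d)}

/-- Both `du` and `Du` are compared with their values at `(a, X_a)`, whence the factor `2`. -/
theorem abs_cell_error_le (hhor : IsHorizontalDeriv u du T) (hvert : IsVerticalGradient u Du b)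
    (hducont : SupContinuousOn du (Icc 0 T))
    (hduX : ContinuousOn (fun s => du s (frz X s)) (Icc a b))
    (hDuX : ContinuousOn (fun s => Du s (frz X s)) (Icc a b))
    (hβint : IntervalIntegrable (fun s => β s X) volume a b)
    (hβL : ∀ s ∈ Ioc a b, ‖β s X‖ ≤ L) (hXb : X b = X a + ∫ s in a..b, β s X)
    (h0a : 0 ≤ a) (hab : a ≤ b) (hbT : b ≤ T) (hba : b - a ≤ η)
    (hX : ∀ s ∈ Icc a b, ∀ r, ‖frz X s r - frz X a r‖ ≤ η)
    (hwa : ∀ r, a ≤ r → w r = X a) (hw : ∀ r, ‖w r - frz X a r‖ ≤ η)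
    (Hdu : ∀ t ∈ Icc 0 T, ∀ y, |t - a| ≤ η → (∀ r, ‖y r - frz X a r‖ ≤ η) →
      |du t y - du a (frz X a)| ≤ ε)
    (HDu : ∀ t ∈ Icc 0 T, ∀ y, |t - a| ≤ η → (∀ r, ‖y r - frz X a r‖ ≤ η) →
      ‖Du t y - Du a (frz X a)‖ ≤ ε) :
    |u b (Function.update w b (X b)) - u a w -
        ∫ s in a..b, (du s (frz X s) + inner ℝ (β s X) (Du s (frz X s)))| ≤
      2 * ε * (1 + 2 * L) * (b - a) := by
  have hwb : w b = X a := hwa b hab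
  have hfrzw : frz w a = w := funext fun r => by
    rcases le_total r a with hr | hr
    · simp [frz, min_eq_left hr]
    · simp [frz, min_eq_right hr, hwa r hr, hwa a le_rfl]
  have hη : 0 ≤ η := (sub_nonneg.2 hab).trans hba
  have hε : 0 ≤ ε := by
    simpa using Hdu a ⟨h0a, hab.trans hbT⟩ (frz X a) (by simpa using hη) fun r => by simpa using hη
  have hT : ∀ s ∈ Ioc a b, s ∈ Icc 0 T := fun s hs => ⟨h0a.trans hs.1.le, hs.2.trans hbT⟩
  have hnear : ∀ s ∈ Ioc a b, |s - a| ≤ η := fun s hs => by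
    rw [abs_of_nonneg (by linarith [hs.1])]; linarith [hs.2]
  have hjump : ∀ v ∈ segment ℝ 0 (∫ s in a..b, β s X), ∀ r,
      ‖Function.update w b (w b + v) r - frz X a r‖ ≤ η := fun v hv r => by
    rcases eq_or_ne r b with rfl | hr
    · have hΔ : ‖∫ s in a..r, β s X‖ ≤ η := by
        simpa [frz, min_eq_right hab, hXb] using hX r ⟨hab, le_rfl⟩ r
      have hv' := segment_subset_closedBall_left (0 : EuclideanSpace ℝ (Fin d)) _ hv
      rw [mem_closedBall_zero_iff, dist_zero_left] at hv'
      simpa [hwb, frz, min_eq_right hab] using hv'.trans hΔ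
    · simpa [Function.update_of_ne hr] using hw r
  have hstep := abs_update_sub_sub_integral_le (ε := 2 * ε) (γ := frz X) (w := w)
    (D₀ := Du a (frz X a)) hab (by simpa [hfrzw] using hhor a b h0a hab hbT w) hvert hβL
    (fun s hs => by
      have h₁ := Hdu s (hT s hs) w (hnear s hs) hw
      have h₂ := Hdu s (hT s hs) (frz X s) (hnear s hs) (hX s (Ioc_subset_Icc_self hs))
      rw [abs_le] at h₁ h₂ ⊢; constructor <;> linarith)
    (fun s hs => (HDu s (hT s hs) _ (hnear s hs) (hX s (Ioc_subset_Icc_self hs))).trans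
      (by linarith))
    (fun v hv => (HDu b ⟨h0a.trans hab, hbT⟩ _ (by rw [abs_of_nonneg (sub_nonneg.2 hab)]; exact hba)
      (hjump v hv)).trans (by linarith))
    ((hducont.continuousOn_comp (γ := fun _ => w) (Icc_subset_Icc h0a hbT) le_rfl
      (by simp)).intervalIntegrable_of_Icc hab)
    (hduX.intervalIntegrable_of_Icc hab) hβint
    (hβint.inner_continuousOn (by rwa [uIcc_of_le hab]))
  rwa [hwb, ← hXb] at hstep

theorem abs_chain_rule_error_le_of_grid {ρ τ : ℝ} {n : ℕ} {t : ℕ → ℝ} (hL : 0 ≤ L)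
    (hβmeas : Measurable fun t => β t X) (hβL : ∀ t ∈ Icc 0 T, ‖β t X‖ ≤ L)
    (huna : ∀ t ∈ Icc (0:ℝ) T, ∀ x y, (∀ s, 0 ≤ s → s ≤ t → x s = y s) → u t x = u t y)
    (hhor : IsHorizontalDeriv u du T) (hvert : ∀ t ∈ Icc 0 T, IsVerticalGradient u Du t)
    (hducont : SupContinuousOn du (Icc 0 T)) (hDucont : SupContinuousOn Du (Icc 0 T))
    (h0ρ : 0 ≤ ρ) (hτT : τ ≤ T)
    (hXsol : ∀ a b : ℝ, ρ ≤ a → a ≤ b → b ≤ T → X b = X a + ∫ s in a..b, β s X)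
    (hfrz : ∀ a ∈ Icc ρ τ, ∀ b ∈ Icc ρ τ, ∀ r, ‖frz X a r - frz X b r‖ ≤ L * |a - b|)
    (ht0 : t 0 = ρ) (htn : t n = τ) (htmono : Monotone t) (htmem : ∀ i, t i ∈ Icc ρ τ)
    (hmesh : ∀ i, (1 + L) * (t (i + 1) - t i) ≤ η)
    (Hu : ∀ y, (∀ r, ‖y r - frz X τ r‖ ≤ η) → |u τ y - u τ (frz X τ)| ≤ ε)
    (Hdu : ∀ i, ∀ t' ∈ Icc 0 T, ∀ y, |t' - t i| ≤ η → (∀ r, ‖y r - frz X (t i) r‖ ≤ η) →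
      |du t' y - du (t i) (frz X (t i))| ≤ ε)
    (HDu : ∀ i, ∀ t' ∈ Icc 0 T, ∀ y, |t' - t i| ≤ η → (∀ r, ‖y r - frz X (t i) r‖ ≤ η) →
      ‖Du t' y - Du (t i) (frz X (t i))‖ ≤ ε) :
    |u τ (frz X τ) - u ρ (frz X ρ) -
        ∫ s in ρ..τ, (du s (frz X s) + inner ℝ (β s X) (Du s (frz X s)))| ≤
      ε * (1 + 2 * (1 + 2 * L) * (τ - ρ)) := by
  have hK : Icc ρ τ ⊆ Icc 0 T := Icc_subset_Icc h0ρ hτT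
  have hduX := hducont.continuousOn_comp hK hL hfrz
  have hDuX := hDucont.continuousOn_comp hK hL hfrz
  have hcell : ∀ i, Icc (t i) (t (i + 1)) ⊆ Icc ρ τ := fun i =>
    Icc_subset_Icc (htmem i).1 (htmem (i + 1)).2
  have hβint : ∀ i, IntervalIntegrable (fun s => β s X) volume (t i) (t (i + 1)) := fun i =>
    intervalIntegrable_of_norm_le_const hβmeas.aestronglyMeasurable fun s hs => by
      rw [uIoc_of_le (htmono i.le_succ)] at hs
      exact hβL s (hK (hcell i (Ioc_subset_Icc_self hs)))
  have hosc : ∀ i, ∀ s ∈ Icc (t i) (t (i + 1)), ∀ r, ‖frz X s r - frz X (t i) r‖ ≤ η :=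
    fun i s hs r => by
      refine (hfrz s (hcell i hs) (t i) (htmem i) r).trans ?_
      rw [abs_of_nonneg (sub_nonneg.2 hs.1)]
      nlinarith [hmesh i, hs.1, hs.2]
  have hη : 0 ≤ η :=
    (mul_nonneg (by linarith) (sub_nonneg.2 (htmono (Nat.le_succ 0)))).trans (hmesh 0)
  have hw : ∀ i r, ‖stepPath X t i r - frz X (t i) r‖ ≤ η := fun i =>
    norm_stepPath_sub_le hη fun j _ s hs => by simpa [frz, min_eq_right hs.1] using hosc j s hs s
  have hstep : ∀ i < n, |u (t (i + 1)) (stepPath X t (i + 1)) - u (t i) (stepPath X t i) -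
      ∫ s in t i..t (i + 1), (du s (frz X s) + inner ℝ (β s X) (Du s (frz X s)))| ≤
      2 * ε * (1 + 2 * L) * (t (i + 1) - t i) := fun i _ => by
    rw [huna _ (hK (htmem (i + 1))) _ _ fun s _ hs => stepPath_succ_of_le hs]
    exact abs_cell_error_le hhor (hvert _ (hK (htmem (i + 1)))) hducont
      (hduX.mono (hcell i)) (hDuX.mono (hcell i)) (hβint i)
      (fun s hs => hβL s (hK (hcell i (Ioc_subset_Icc_self hs))))
      (hXsol _ _ (htmem i).1 (htmono i.le_succ) ((htmem (i + 1)).2.trans hτT))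
      (h0ρ.trans (htmem i).1) (htmono i.le_succ) ((htmem (i + 1)).2.trans hτT)
      (by nlinarith [hmesh i, htmono i.le_succ]) (hosc i) (fun r hr => stepPath_of_le hr)
      (hw i) (Hdu i) (HDu i)
  have hsum := abs_sub_sub_integral_le_of_forall_step (φ := fun i => u (t i) (stepPath X t i))
    (fun i _ => ((hduX.mono (hcell i)).intervalIntegrable_of_Icc (htmono i.le_succ)).add
      ((hβint i).inner_continuousOn
        (by rw [uIcc_of_le (htmono i.le_succ)]; exact hDuX.mono (hcell i))))
    hstep
  have hend := Hu (stepPath X t n) fun r => by simpa [htn] using hw n r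
  have hstart : stepPath X t 0 = frz X ρ := by rw [← ht0]; rfl
  simp only [ht0, htn, hstart] at hsum
  rw [abs_le] at hsum hend ⊢
  constructor <;> linarith

theorem abs_chain_rule_error_le {ρ τ : ℝ} (hL : 0 ≤ L)
    (hβmeas : Measurable fun t => β t X) (hβL : ∀ t ∈ Icc 0 T, ‖β t X‖ ≤ L)
    (huna : ∀ t ∈ Icc (0:ℝ) T, ∀ x y, (∀ s, 0 ≤ s → s ≤ t → x s = y s) → u t x = u t y)
    (hhor : IsHorizontalDeriv u du T) (hvert : ∀ t ∈ Icc 0 T, IsVerticalGradient u Du t)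
    (hucont : SupContinuousOn u (Icc 0 T)) (hducont : SupContinuousOn du (Icc 0 T))
    (hDucont : SupContinuousOn Du (Icc 0 T))
    (h0ρ : 0 ≤ ρ) (hρτ : ρ ≤ τ) (hτT : τ ≤ T)
    (hXsol : ∀ a b : ℝ, ρ ≤ a → a ≤ b → b ≤ T → X b = X a + ∫ s in a..b, β s X) (hε : 0 < ε) :
    |u τ (frz X τ) - u ρ (frz X ρ) -
        ∫ s in ρ..τ, (du s (frz X s) + inner ℝ (β s X) (Du s (frz X s)))| ≤
      ε * (1 + 2 * (1 + 2 * L) * (τ - ρ)) := by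
  have hK : Icc ρ τ ⊆ Icc 0 T := Icc_subset_Icc h0ρ hτT
  have hXlip : LipschitzOnWith L.toNNReal X (Icc ρ T) :=
    lipschitzOnWith_of_eq_add_integral hXsol fun s hs => by
      rw [Real.coe_toNNReal _ hL]; exact hβL s ⟨h0ρ.trans hs.1, hs.2⟩
  have hfrz : ∀ a ∈ Icc ρ τ, ∀ b ∈ Icc ρ τ, ∀ r, ‖frz X a r - frz X b r‖ ≤ L * |a - b| :=
    fun a ha b hb r => by
      simpa [Real.coe_toNNReal _ hL] using norm_frz_sub_frz_le hXlip
        (Icc_subset_Icc_right hτT ha) (Icc_subset_Icc_right hτT hb) r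
  obtain ⟨η₁, hη₁, Hdu⟩ := hducont.exists_uniform_modulus isCompact_Icc hK hL hfrz hε
  obtain ⟨η₂, hη₂, HDu⟩ := hDucont.exists_uniform_modulus isCompact_Icc hK hL hfrz hε
  obtain ⟨η₃, hη₃, Hu⟩ := hucont τ ⟨h0ρ.trans hρτ, hτT⟩ (frz X τ) ε hε
  set η := min (min η₁ η₂) η₃
  have hη : 0 < η := lt_min (lt_min hη₁ hη₂) hη₃
  obtain ⟨n, t, ht0, htn, htmono, htmem, hmesh⟩ := exists_grid hρτ (h := η / (1 + L))
    (by positivity)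
  have hη₁₂ : η ≤ η₁ ∧ η ≤ η₂ :=
    ⟨(min_le_left _ _).trans (min_le_left _ _), (min_le_left _ _).trans (min_le_right _ _)⟩
  refine abs_chain_rule_error_le_of_grid hL hβmeas hβL huna hhor hvert hducont hDucont h0ρ hτT
    hXsol hfrz ht0 htn htmono htmem
    (fun i => by rw [mul_comm, ← le_div_iff₀ (by linarith)]; exact hmesh i)
    (fun y hy => Hu τ ⟨h0ρ.trans hρτ, hτT⟩ y (by simpa using hη₃.le)
      fun r => (hy r).trans (min_le_right _ _))
    (fun i t' ht' y h₁ h₂ => Hdu (t i) (htmem i) t' ht' y (h₁.trans hη₁₂.1)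
      fun r => (h₂ r).trans hη₁₂.1)
    (fun i t' ht' y h₁ h₂ => HDu (t i) (htmem i) t' ht' y (h₁.trans hη₁₂.2)
      fun r => (h₂ r).trans hη₁₂.2)

end PathFunctionals

theorem stmt_16_general (T L : ℝ) (d : ℕ)
    (β : ℝ → (ℝ → EuclideanSpace ℝ (Fin d)) → EuclideanSpace ℝ (Fin d))
    (u du : ℝ → (ℝ → EuclideanSpace ℝ (Fin d)) → ℝ)
    (Du : ℝ → (ℝ → EuclideanSpace ℝ (Fin d)) → EuclideanSpace ℝ (Fin d))
    -- β: measurable in time, nonanticipative, bounded, Lipschitz in the path (sup on [0,t])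
    (hβmeas : ∀ x, Measurable fun t => β t x)
    (hβna : ∀ t ∈ Set.Icc (0:ℝ) T, ∀ x y,
      (∀ s, 0 ≤ s → s ≤ t → x s = y s) → β t x = β t y)
    (hβbd : ∀ t ∈ Set.Icc (0:ℝ) T, ∀ x, ‖β t x‖ ≤ L)
    -- nonanticipativity of u, du, Du
    (huna : ∀ t ∈ Set.Icc (0:ℝ) T, ∀ x y,
      (∀ s, 0 ≤ s → s ≤ t → x s = y s) → u t x = u t y)
    -- the horizontal-extension identity defining `𝔡_t u = du`
    (hhor : ∀ ρ τ : ℝ, 0 ≤ ρ → ρ ≤ τ → τ ≤ T → ∀ x : ℝ → EuclideanSpace ℝ (Fin d),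
      u τ (frz x ρ) = u ρ (frz x ρ) + ∫ s' in ρ..τ, du s' (frz x ρ))
    -- the vertical derivative: `∇u(t,x) = Du t x`
    (hvert : ∀ t ∈ Set.Icc (0:ℝ) T, ∀ x : ℝ → EuclideanSpace ℝ (Fin d),
      HasFDerivAt (fun h : EuclideanSpace ℝ (Fin d) =>
          u t (Function.update x t (x t + h)))
        (innerSL ℝ (Du t x)) 0)
    -- joint continuity of u, du, Du in time and in the path (uniform norm)
    (hucont : ∀ t ∈ Set.Icc (0:ℝ) T, ∀ x, ∀ ε > (0:ℝ), ∃ η > (0:ℝ),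
      ∀ t' ∈ Set.Icc (0:ℝ) T, ∀ y, |t' - t| ≤ η → (∀ s, ‖y s - x s‖ ≤ η) →
        |u t' y - u t x| ≤ ε)
    (hducont : ∀ t ∈ Set.Icc (0:ℝ) T, ∀ x, ∀ ε > (0:ℝ), ∃ η > (0:ℝ),
      ∀ t' ∈ Set.Icc (0:ℝ) T, ∀ y, |t' - t| ≤ η → (∀ s, ‖y s - x s‖ ≤ η) →
        |du t' y - du t x| ≤ ε)
    (hDucont : ∀ t ∈ Set.Icc (0:ℝ) T, ∀ x, ∀ ε > (0:ℝ), ∃ η > (0:ℝ),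
      ∀ t' ∈ Set.Icc (0:ℝ) T, ∀ y, |t' - t| ≤ η → (∀ s, ‖y s - x s‖ ≤ η) →
        ‖Du t' y - Du t x‖ ≤ ε)
    -- the solution X of the path-dependent ODE starting at time ρ
    (ρ : ℝ) (hρ : ρ ∈ Set.Icc (0:ℝ) T) (X : ℝ → EuclideanSpace ℝ (Fin d))
    (hXsol : ∀ a b : ℝ, ρ ≤ a → a ≤ b → b ≤ T →
      X b = X a + ∫ s' in a..b, β s' X) :
    ∀ τ : ℝ, ρ ≤ τ → τ ≤ T →
      u τ (frz X τ) - u ρ (frz X ρ) =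
        ∫ s' in ρ..τ,
          (du s' (frz X s') +
            inner (𝕜 := ℝ) (β s' (frz X s')) (Du s' (frz X s'))) := by
  intro τ hρτ hτT
  have hβX : ∀ s ∈ uIcc ρ τ, β s (frz X s) = β s X := fun s hs => by
    rw [uIcc_of_le hρτ] at hs
    exact hβna s ⟨hρ.1.trans hs.1, hs.2.trans hτT⟩ _ _ fun r _ hr => by simp [frz, min_eq_left hr]
  rw [intervalIntegral.integral_congr (g := fun s => du s (frz X s) +
    inner ℝ (β s X) (Du s (frz X s))) fun s hs => by simp only [hβX s hs]]
  have hL : 0 ≤ L := (norm_nonneg _).trans (hβbd ρ hρ X)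
  set C := 1 + 2 * (1 + 2 * L) * (τ - ρ)
  have hC : 0 < C := by nlinarith
  refine eq_of_forall_dist_le fun ε hε => ?_
  calc dist _ _ ≤ ε / C * C := by
        rw [Real.dist_eq]
        exact abs_chain_rule_error_le hL (hβmeas X) (fun t ht => hβbd t ht X) huna hhor hvert
          hucont hducont hDucont hρ.1 hρτ hτT hXsol (div_pos hε hC)
    _ = ε := div_mul_cancel₀ ε hC.ne'

/-- generalized Itô–Kunita / chain rule for vertically differentiable
deterministic path functionals.  If `u` satisfies the horizontal-extension identity
`u(τ, x_{ρ,τ−ρ}) = u(ρ, x_ρ) + ∫_ρ^τ 𝔡_s u(s, x_{ρ,s−ρ}) ds` and has a (bounded,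
continuous) vertical gradient `∇u = Du` (the Fréchet derivative at `0` of the endpoint
perturbation `h ↦ u(t, x_t^h)`), with `𝔡u = du` continuous and bounded, `u` continuous,
and all functionals nonanticipative, then along any solution `X` of `dX/dt = β(t,X_t)`
with `X = x_ρ` on `[0,ρ]`,
`u(τ, X_τ) − u(ρ, x_ρ) = ∫_ρ^τ [ 𝔡_s u(s,X_s) + β(s,X_s)·∇u(s,X_s) ] ds`. -/
theorem stmt_16 (T L : ℝ) (hT : 0 < T) (hL : 0 < L) (d : ℕ) (hd : 0 < d)
    (β : ℝ → (ℝ → EuclideanSpace ℝ (Fin d)) → EuclideanSpace ℝ (Fin d))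
    (u du : ℝ → (ℝ → EuclideanSpace ℝ (Fin d)) → ℝ)
    (Du : ℝ → (ℝ → EuclideanSpace ℝ (Fin d)) → EuclideanSpace ℝ (Fin d))
    -- β: measurable in time, nonanticipative, bounded, Lipschitz in the path (sup on [0,t])
    (hβmeas : ∀ x, Measurable fun t => β t x)
    (hβna : ∀ t ∈ Set.Icc (0:ℝ) T, ∀ x y,
      (∀ s, 0 ≤ s → s ≤ t → x s = y s) → β t x = β t y)
    (hβbd : ∀ t ∈ Set.Icc (0:ℝ) T, ∀ x, ‖β t x‖ ≤ L)
    (hβlip : ∀ t ∈ Set.Icc (0:ℝ) T, ∀ x y, ∀ C : ℝ, 0 ≤ C →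
      (∀ s, 0 ≤ s → s ≤ t → ‖x s - y s‖ ≤ C) → ‖β t x - β t y‖ ≤ L * C)
    -- nonanticipativity of u, du, Du
    (huna : ∀ t ∈ Set.Icc (0:ℝ) T, ∀ x y,
      (∀ s, 0 ≤ s → s ≤ t → x s = y s) → u t x = u t y)
    (hduna : ∀ t ∈ Set.Icc (0:ℝ) T, ∀ x y,
      (∀ s, 0 ≤ s → s ≤ t → x s = y s) → du t x = du t y)
    (hDuna : ∀ t ∈ Set.Icc (0:ℝ) T, ∀ x y,
      (∀ s, 0 ≤ s → s ≤ t → x s = y s) → Du t x = Du t y)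
    -- the horizontal-extension identity defining `𝔡_t u = du`
    (hhor : ∀ ρ τ : ℝ, 0 ≤ ρ → ρ ≤ τ → τ ≤ T → ∀ x : ℝ → EuclideanSpace ℝ (Fin d),
      u τ (frz x ρ) = u ρ (frz x ρ) + ∫ s' in ρ..τ, du s' (frz x ρ))
    -- the vertical derivative: `∇u(t,x) = Du t x`
    (hvert : ∀ t ∈ Set.Icc (0:ℝ) T, ∀ x : ℝ → EuclideanSpace ℝ (Fin d),
      HasFDerivAt (fun h : EuclideanSpace ℝ (Fin d) =>
          u t (Function.update x t (x t + h)))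
        (innerSL ℝ (Du t x)) 0)
    -- boundedness of du and Du
    (hdubd : ∃ C : ℝ, ∀ t ∈ Set.Icc (0:ℝ) T, ∀ x, |du t x| ≤ C)
    (hDubd : ∃ C : ℝ, ∀ t ∈ Set.Icc (0:ℝ) T, ∀ x, ‖Du t x‖ ≤ C)
    -- joint continuity of u, du, Du in time and in the path (uniform norm)
    (hucont : ∀ t ∈ Set.Icc (0:ℝ) T, ∀ x, ∀ ε > (0:ℝ), ∃ η > (0:ℝ),
      ∀ t' ∈ Set.Icc (0:ℝ) T, ∀ y, |t' - t| ≤ η → (∀ s, ‖y s - x s‖ ≤ η) →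
        |u t' y - u t x| ≤ ε)
    (hducont : ∀ t ∈ Set.Icc (0:ℝ) T, ∀ x, ∀ ε > (0:ℝ), ∃ η > (0:ℝ),
      ∀ t' ∈ Set.Icc (0:ℝ) T, ∀ y, |t' - t| ≤ η → (∀ s, ‖y s - x s‖ ≤ η) →
        |du t' y - du t x| ≤ ε)
    (hDucont : ∀ t ∈ Set.Icc (0:ℝ) T, ∀ x, ∀ ε > (0:ℝ), ∃ η > (0:ℝ),
      ∀ t' ∈ Set.Icc (0:ℝ) T, ∀ y, |t' - t| ≤ η → (∀ s, ‖y s - x s‖ ≤ η) →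
        ‖Du t' y - Du t x‖ ≤ ε)
    -- the solution X of the path-dependent ODE starting at time ρ
    (ρ : ℝ) (hρ : ρ ∈ Set.Icc (0:ℝ) T) (X : ℝ → EuclideanSpace ℝ (Fin d))
    (hXc : Continuous X)
    (hXsol : ∀ a b : ℝ, ρ ≤ a → a ≤ b → b ≤ T →
      X b = X a + ∫ s' in a..b, β s' X) :
    ∀ τ : ℝ, ρ ≤ τ → τ ≤ T →
      u τ (frz X τ) - u ρ (frz X ρ) =
        ∫ s' in ρ..τ,
          (du s' (frz X s') +
            inner (𝕜 := ℝ) (β s' (frz X s')) (Du s' (frz X s'))) :=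
  stmt_16_general T L d β u du Du hβmeas hβna hβbd huna hhor hvert hucont hducont hDucont ρ hρ X
    hXsol
end
end
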